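/- Under mutual incoherence with parameters α > 1 and s ≥ 1, and the cone condition ‖Δ_{S*ᶜ}‖_{2,1} ≤ 3‖Δ_{S*}‖_{2,1} with |S*| ≤ s, the sup-norm bound ‖Δ‖_{2,∞} ≤ (1 + 16/(7(α−1)))·‖ΨΔ‖_{2,∞} holds. -/

import Mathlib

open scoped BigOperators
open Matrix Classical

/-- Euclidean norm of a row. -/
noncomputable def rowNorm {q : ℕ} (v : Fin q → ℝ) : ℝ := Real.sqrt (∑ j, (v j) ^ 2)

/-- `ℓ_{2,1}` norm: sum of row Euclidean norms. -/
noncomputable def norm21 {p q : ℕ} (B : Matrix (Fin p) (Fin q) ℝ) : ℝ :=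
  ∑ j, rowNorm (B j)

/-- `ℓ_{2,∞}` norm: maximum of row Euclidean norms. -/
noncomputable def norm2inf {p q : ℕ} (B : Matrix (Fin p) (Fin q) ℝ) : ℝ :=
  ⨆ j, rowNorm (B j)

/-- Frobenius norm of a real matrix. -/
noncomputable def frob {n q : ℕ} (Z : Matrix (Fin n) (Fin q) ℝ) : ℝ :=
  Real.sqrt (∑ i, ∑ j, (Z i j) ^ 2)

/-- Restriction of a matrix to a set of rows (zero outside `S`). -/
noncomputable def restrict {p q : ℕ} (B : Matrix (Fin p) (Fin q) ℝ) (S : Set (Fin p)) :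
    Matrix (Fin p) (Fin q) ℝ :=
  fun j k => if j ∈ S then B j k else 0

/-- Mutual incoherence of the Gram matrix `Ψ = XᵀX/n`. -/
def MutualIncoherence {p : ℕ} (Ψ : Matrix (Fin p) (Fin p) ℝ) (α : ℝ) (s : ℕ) : Prop :=
  (∀ j, Ψ j j = 1) ∧ ∀ j j' : Fin p, j ≠ j' → |Ψ j j'| ≤ 1 / (7 * α * s)

/-!
Writing the `j`-th row of `ΨΔ` as `Δ_j + ∑_{j' ≠ j} Ψ_{jj'} Δ_{j'}` and using the incoherence bound
on the off-diagonal entries gives `‖Δ‖_{2,∞} ≤ ‖ΨΔ‖_{2,∞} + ‖Δ‖_{2,1} / (7αs)`. The cone condition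
bounds `‖Δ‖_{2,1}` by `4‖Δ_{S*}‖_{2,1} ≤ 4s‖Δ‖_{2,∞}`, so `‖Δ‖_{2,∞} ≤ ‖ΨΔ‖_{2,∞} + 4/(7α)·‖Δ‖_{2,∞}`,
and solving for `‖Δ‖_{2,∞}` gives the claim since `7α/(7α - 4) ≤ 1 + 16/(7(α - 1))`.
-/

lemma rowNorm_eq_norm {q : ℕ} (v : Fin q → ℝ) :
    rowNorm v = ‖(WithLp.toLp 2 v : EuclideanSpace ℝ (Fin q))‖ := by
  simp [rowNorm, EuclideanSpace.norm_eq]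

lemma rowNorm_nonneg {q : ℕ} (v : Fin q → ℝ) : 0 ≤ rowNorm v := Real.sqrt_nonneg _

lemma rowNorm_sub_sum_smul_le {q : ℕ} {ι : Type*} (s : Finset ι) (v : Fin q → ℝ) (c : ι → ℝ)
    (w : ι → Fin q → ℝ) :
    rowNorm (v - ∑ i ∈ s, c i • w i) ≤ rowNorm v + ∑ i ∈ s, |c i| * rowNorm (w i) := by
  simp only [rowNorm_eq_norm, WithLp.toLp_sub, WithLp.toLp_sum, WithLp.toLp_smul]
  calc _ ≤ _ + ‖∑ i ∈ s, c i • WithLp.toLp 2 (w i)‖ := norm_sub_le _ _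
    _ ≤ _ := by
      gcongr
      exact (norm_sum_le _ _).trans_eq (by simp [norm_smul])

section norm2inf

variable {p q : ℕ}

lemma rowNorm_le_norm2inf (B : Matrix (Fin p) (Fin q) ℝ) (j : Fin p) :
    rowNorm (B j) ≤ norm2inf B :=
  le_ciSup (f := fun j => rowNorm (B j)) (Set.finite_range _).bddAbove j

lemma norm2inf_nonneg (B : Matrix (Fin p) (Fin q) ℝ) : 0 ≤ norm2inf B :=
  Real.iSup_nonneg fun _ => rowNorm_nonneg _

lemma rowNorm_restrict (B : Matrix (Fin p) (Fin q) ℝ) (S : Set (Fin p)) (j : Fin p) :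
    rowNorm (restrict B S j) = if j ∈ S then rowNorm (B j) else 0 := by
  by_cases hj : j ∈ S <;> simp [rowNorm, restrict, hj]

lemma norm21_eq_restrict_add_restrict_compl (B : Matrix (Fin p) (Fin q) ℝ) (S : Set (Fin p)) :
    norm21 B = norm21 (restrict B S) + norm21 (restrict B Sᶜ) := by
  simp only [norm21, rowNorm_restrict, ← Finset.sum_add_distrib, Set.mem_compl_iff]
  exact Finset.sum_congr rfl fun j _ => by split_ifs <;> simp

lemma norm21_restrict_le (B : Matrix (Fin p) (Fin q) ℝ) (S : Set (Fin p)) :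
    norm21 (restrict B S) ≤ S.ncard * norm2inf B := by
  calc norm21 (restrict B S) = ∑ j ∈ S.toFinset, rowNorm (B j) := by
        simp [norm21, rowNorm_restrict, Finset.sum_ite, Set.filter_mem_univ_eq_toFinset]
    _ ≤ ∑ _j ∈ S.toFinset, norm2inf B :=
        Finset.sum_le_sum fun j _ => rowNorm_le_norm2inf B j
    _ = S.ncard * norm2inf B := by simp [Set.ncard_eq_toFinset_card']

lemma norm21_le_of_cone {B : Matrix (Fin p) (Fin q) ℝ} {S : Set (Fin p)}
    (hcone : norm21 (restrict B Sᶜ) ≤ 3 * norm21 (restrict B S)) :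
    norm21 B ≤ 4 * S.ncard * norm2inf B := by
  have := norm21_restrict_le B S
  rw [norm21_eq_restrict_add_restrict_compl B S]
  linarith

variable {Ψ : Matrix (Fin p) (Fin p) ℝ} {μ : ℝ}

lemma rowNorm_le_norm2inf_mul_add (hdiag : ∀ j, Ψ j j = 1)
    (hoff : ∀ j j', j ≠ j' → |Ψ j j'| ≤ μ) (hμ : 0 ≤ μ) (B : Matrix (Fin p) (Fin q) ℝ)
    (j : Fin p) :
    rowNorm (B j) ≤ norm2inf (Ψ * B) + μ * norm21 B := by
  have hrow : B j = (Ψ * B) j - ∑ j' ∈ Finset.univ.erase j, Ψ j j' • B j' := by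
    have : (Ψ * B) j = ∑ j', Ψ j j' • B j' := by ext k; simp [Matrix.mul_apply]
    rw [this, ← Finset.add_sum_erase _ _ (Finset.mem_univ j), hdiag, one_smul,
      add_sub_cancel_right]
  calc rowNorm (B j)
      = rowNorm ((Ψ * B) j - ∑ j' ∈ Finset.univ.erase j, Ψ j j' • B j') := congrArg rowNorm hrow
    _ ≤ rowNorm ((Ψ * B) j) + ∑ j' ∈ Finset.univ.erase j, |Ψ j j'| * rowNorm (B j') :=
        rowNorm_sub_sum_smul_le _ _ _ _
    _ ≤ norm2inf (Ψ * B) + ∑ j' ∈ Finset.univ.erase j, μ * rowNorm (B j') := by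
        gcongr with j' hj'
        · exact rowNorm_le_norm2inf _ _
        · exact rowNorm_nonneg _
        · exact hoff j j' (Finset.ne_of_mem_erase hj').symm
    _ ≤ norm2inf (Ψ * B) + μ * norm21 B := by
        rw [norm21, Finset.mul_sum]
        gcongr
        · exact fun _ _ _ => mul_nonneg hμ (rowNorm_nonneg _)
        · exact Finset.erase_subset _ _

lemma norm2inf_le_norm2inf_mul_add (hdiag : ∀ j, Ψ j j = 1)
    (hoff : ∀ j j', j ≠ j' → |Ψ j j'| ≤ μ) (hμ : 0 ≤ μ) (B : Matrix (Fin p) (Fin q) ℝ) :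
    norm2inf B ≤ norm2inf (Ψ * B) + μ * norm21 B :=
  Real.iSup_le (rowNorm_le_norm2inf_mul_add hdiag hoff hμ B)
    (add_nonneg (norm2inf_nonneg _) (mul_nonneg hμ (Finset.sum_nonneg fun _ _ => rowNorm_nonneg _)))

end norm2inf

lemma le_mul_of_le_add_four_div_mul {α D M : ℝ} (hα : 1 < α) (hM : 0 ≤ M)
    (h : D ≤ M + 4 / (7 * α) * D) : D ≤ (1 + 16 / (7 * (α - 1))) * M := by
  have hα1 : 0 < α - 1 := by linarith
  have h' : (7 * α - 4) * D ≤ 7 * α * M := by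
    have := mul_le_mul_of_nonneg_left h (by linarith : (0 : ℝ) ≤ 7 * α)
    rw [mul_add, ← mul_assoc, mul_div_cancel₀ _ (by positivity)] at this
    linarith
  rw [show 1 + 16 / (7 * (α - 1)) = (7 * α + 9) / (7 * (α - 1)) by field_simp; ring,
    div_mul_eq_mul_div, le_div_iff₀ (by positivity)]
  nlinarith [mul_le_mul_of_nonneg_left h' hα1.le]

theorem norm2inf_bound_general {n p q : ℕ}
    (X : Matrix (Fin n) (Fin p) ℝ) (α : ℝ) (hα : 1 < α) (s : ℕ)
    (hinc : MutualIncoherence ((1 / (n : ℝ)) • (Xᵀ * X)) α s)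
    (Sstar : Set (Fin p)) (hcard : Sstar.ncard ≤ s)
    (Δ : Matrix (Fin p) (Fin q) ℝ)
    (hcone : norm21 (restrict Δ Sstarᶜ) ≤ 3 * norm21 (restrict Δ Sstar)) :
    norm2inf Δ ≤
      (1 + 16 / (7 * (α - 1))) * norm2inf (((1 / (n : ℝ)) • (Xᵀ * X)) * Δ) := by
  set Ψ := (1 / (n : ℝ)) • (Xᵀ * X)
  have hα0 : 0 < α := by linarith
  have hsup := norm2inf_le_norm2inf_mul_add hinc.1 hinc.2 (by positivity) Δ
  have h21 := norm21_le_of_cone hcone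
  -- `1 / 0 = 0` makes this hold at `s = 0` too
  have hμs : 1 / (7 * α * s) * s ≤ 1 / (7 * α) :=
    calc 1 / (7 * α * s) * s = 1 / (7 * α) * (s / s) := by ring
      _ ≤ 1 / (7 * α) := mul_le_of_le_one_right (by positivity) (div_self_le_one _)
  have hD0 := norm2inf_nonneg Δ
  refine le_mul_of_le_add_four_div_mul hα (norm2inf_nonneg _) ?_
  calc norm2inf Δ ≤ norm2inf (Ψ * Δ) + 1 / (7 * α * s) * (4 * Sstar.ncard * norm2inf Δ) :=
        hsup.trans (by gcongr)
    _ ≤ norm2inf (Ψ * Δ) + 1 / (7 * α * s) * (4 * s * norm2inf Δ) := by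
        gcongr
    _ = norm2inf (Ψ * Δ) + 4 * norm2inf Δ * (1 / (7 * α * s) * s) := by ring
    _ ≤ norm2inf (Ψ * Δ) + 4 * norm2inf Δ * (1 / (7 * α)) := by gcongr
    _ = norm2inf (Ψ * Δ) + 4 / (7 * α) * norm2inf Δ := by ring

/-- Under mutual incoherence and the cone condition, the sup-norm bound
`‖Δ‖_{2,∞} ≤ (1 + 16/(7(α−1)))·‖ΨΔ‖_{2,∞}` holds. -/
theorem norm2inf_bound {n p q : ℕ} (hn : 0 < n)
    (X : Matrix (Fin n) (Fin p) ℝ) (α : ℝ) (hα : 1 < α) (s : ℕ) (hs : 1 ≤ s)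
    (hinc : MutualIncoherence ((1 / (n : ℝ)) • (Xᵀ * X)) α s)
    (Sstar : Set (Fin p)) (hcard : Sstar.ncard ≤ s)
    (Δ : Matrix (Fin p) (Fin q) ℝ)
    (hcone : norm21 (restrict Δ Sstarᶜ) ≤ 3 * norm21 (restrict Δ Sstar)) :
    norm2inf Δ ≤
      (1 + 16 / (7 * (α - 1))) * norm2inf (((1 / (n : ℝ)) • (Xᵀ * X)) * Δ) :=
  norm2inf_bound_general X α hα s hinc Sstar hcard Δ hcone
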